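/- arXiv:1611.06703 — 4 statements merged into one kernel-verified Lean document; each statement's English description precedes it below -/
import Mathlib

section
/- Let G = (N, Σ, R, S) be a linear context-free grammar and graph(G) its associated labeled graph. Then: (1) for every accepting path P of graph(G), the word west(P)·east(P) belongs to L(G); and (2) for every word w ∈ L(G), there exists an accepting path P of graph(G) such that w = west(P)·east(P). -/
/-
In a linear grammar every sentential form derived from a single nonterminal has the shape
`u A v` or `u` with `u, v` terminal words, so a derivation is a sequence of rule applications at
the one nonterminal present. Each application of `A → u B v` appends `u` on the left and prepends
`v` on the right, which is exactly how `west` and `east` grow along the corresponding edge of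
`graph(G)`; the last rule `A → u` is the edge into `⊥`. Read forwards this turns an accepting
path into a derivation, read backwards it turns a derivation into an accepting path.
-/
def Symbol.isNT {T N : Type} : Symbol T N → Bool
  | Symbol.nonterminal _ => true
  | Symbol.terminal _ => false

def IsLinear {T : Type} (G : ContextFreeGrammar.{0} T) : Prop :=
  ∀ r ∈ G.rules, r.output.countP Symbol.isNT ≤ 1

/-- Paths in the labeled graph `graph(G)`.  Vertices are `Option G.NT`, where `some A` is the
nonterminal `A` and `none` is the sink `⊥`.  `GPath G v rs ws es z` means that the sequence of
rules `rs` labels a path from vertex `v` to vertex `z`, with `west(P) = ws` and `east(P) = es`: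
an edge `(A, r, B)` exists iff `r : A → u B v` with `u, v ∈ Σ*` (contributing `u` to the west
word and `v` to the east word), and an edge `(A, r, ⊥)` exists iff `r : A → u` with `u ∈ Σ*`
(contributing `u` to the west word and `ε` to the east word); `west(P)` concatenates left to
right along the path, `east(P)` concatenates right to left. -/
inductive GPath {T : Type} (G : ContextFreeGrammar.{0} T) :
    Option G.NT → List (ContextFreeRule T G.NT) → List T → List T → Option G.NT → Prop
  | nil (v : Option G.NT) : GPath G v [] [] [] v
  | cons_nt {A B : G.NT} {u v : List T} {rs ws es} {z : Option G.NT}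
      (r : ContextFreeRule T G.NT) :
      r ∈ G.rules → r.input = A →
      r.output = u.map Symbol.terminal ++ [Symbol.nonterminal B] ++ v.map Symbol.terminal →
      GPath G (some B) rs ws es z →
      GPath G (some A) (r :: rs) (u ++ ws) (es ++ v) z
  | cons_bot {A : G.NT} {u : List T} {rs ws es} {z : Option G.NT}
      (r : ContextFreeRule T G.NT) :
      r ∈ G.rules → r.input = A →
      r.output = u.map Symbol.terminal →
      GPath G none rs ws es z →
      GPath G (some A) (r :: rs) (u ++ ws) es z

section

open ContextFreeGrammar

variable {T : Type}

lemma exists_eq_map_terminal_of_countP_isNT_eq_zero {N : Type} {l : List (Symbol T N)}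
    (h : l.countP Symbol.isNT = 0) : ∃ u : List T, l = u.map Symbol.terminal := by
  induction l with
  | nil => exact ⟨[], rfl⟩
  | cons x l ih =>
    cases x with
    | terminal a =>
      rw [List.countP_cons_of_neg Bool.false_ne_true] at h
      obtain ⟨u, rfl⟩ := ih h
      exact ⟨a :: u, rfl⟩
    | nonterminal B => rw [List.countP_cons_of_pos rfl] at h; omega

lemma exists_eq_map_terminal_or_of_countP_isNT_le_one {N : Type} {l : List (Symbol T N)}
    (h : l.countP Symbol.isNT ≤ 1) :
    (∃ u : List T, l = u.map Symbol.terminal) ∨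
      ∃ (u : List T) (B : N) (v : List T),
        l = u.map Symbol.terminal ++ [Symbol.nonterminal B] ++ v.map Symbol.terminal := by
  induction l with
  | nil => exact .inl ⟨[], rfl⟩
  | cons x l ih =>
    cases x with
    | terminal a =>
      rw [List.countP_cons_of_neg Bool.false_ne_true] at h
      rcases ih h with ⟨u, rfl⟩ | ⟨u, B, v, rfl⟩
      · exact .inl ⟨a :: u, rfl⟩
      · exact .inr ⟨a :: u, B, v, rfl⟩
    | nonterminal B =>
      rw [List.countP_cons_of_pos rfl] at h
      obtain ⟨v, rfl⟩ := exists_eq_map_terminal_of_countP_isNT_eq_zero (l := l) (by omega)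
      exact .inr ⟨[], B, v, rfl⟩

lemma map_terminal_append_nonterminal_append_inj {N : Type} {p q : List T}
    {p' q' : List (Symbol T N)} {A X : N}
    (h : p.map Symbol.terminal ++ [Symbol.nonterminal A] ++ q.map Symbol.terminal
        = p' ++ [Symbol.nonterminal X] ++ q') :
    p.map Symbol.terminal = p' ∧ A = X ∧ q.map Symbol.terminal = q' := by
  simp only [List.append_assoc, List.singleton_append] at h
  obtain ⟨hp, hA, hq⟩ := (List.append_cons_inj_of_notMem (by simp) (by simp)).mp h
  exact ⟨hp, Symbol.nonterminal.inj hA, hq⟩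

namespace ContextFreeGrammar

variable {G : ContextFreeGrammar.{0} T}

lemma Derives.eq_of_map_terminal {u : List T} {s : List (Symbol T G.NT)}
    (h : G.Derives (u.map Symbol.terminal) s) : s = u.map Symbol.terminal := by
  rcases h.eq_or_head with rfl | ⟨v, hstep, -⟩
  · rfl
  · obtain ⟨r, -, hmem⟩ := hstep.exists_nonterminal_input_mem
    simp at hmem

lemma Produces.exists_rule_of_single_nonterminal {p q : List T} {A : G.NT}
    {s : List (Symbol T G.NT)}
    (h : G.Produces
      (p.map Symbol.terminal ++ [Symbol.nonterminal A] ++ q.map Symbol.terminal) s) :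
    ∃ r ∈ G.rules, r.input = A ∧
      s = p.map Symbol.terminal ++ r.output ++ q.map Symbol.terminal := by
  obtain ⟨r, hr, hrw⟩ := h
  obtain ⟨p', q', hparts, rfl⟩ := hrw.exists_parts
  obtain ⟨rfl, rfl, rfl⟩ := map_terminal_append_nonterminal_append_inj hparts
  exact ⟨r, hr, rfl, rfl⟩

end ContextFreeGrammar

namespace GPath

variable {G : ContextFreeGrammar.{0} T}

lemma derives {v : Option G.NT} {rs ws es} (h : GPath G v rs ws es none) :
    G.Derives (v.toList.map Symbol.nonterminal) ((ws ++ es).map Symbol.terminal) := by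
  generalize hz : (none : Option G.NT) = z at h
  induction h with
  | nil => subst hz; exact Derives.refl []
  | @cons_nt A B u v _ _ _ _ r hr hin hout _ ih =>
    have hstep : G.Produces [Symbol.nonterminal A]
        (u.map Symbol.terminal ++ [Symbol.nonterminal B] ++ v.map Symbol.terminal) :=
      ⟨r, hr, hin ▸ hout ▸ ContextFreeRule.Rewrites.input_output⟩
    simpa using hstep.trans_derives (((ih hz).append_left _).append_right _)
  | cons_bot r hr hin hout htail _ =>
    cases htail
    simpa using Produces.single ⟨r, hr, hin ▸ hout ▸ ContextFreeRule.Rewrites.input_output⟩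

end GPath

lemma exists_gpath_of_derives {G : ContextFreeGrammar.{0} T} (hlin : IsLinear G)
    {s : List (Symbol T G.NT)} {w : List T} (h : G.Derives s (w.map Symbol.terminal))
    {p q : List T} {A : G.NT}
    (hs : s = p.map Symbol.terminal ++ [Symbol.nonterminal A] ++ q.map Symbol.terminal) :
    ∃ rs ws es, GPath G (some A) rs ws es none ∧ w = p ++ ws ++ es ++ q := by
  induction h using Relation.ReflTransGen.head_induction_on generalizing p q A with
  | refl =>
    have hA : Symbol.nonterminal A ∈ w.map (Symbol.terminal (N := G.NT)) := by simp [hs]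
    simp at hA
  | head hstep htail ih =>
    subst hs
    obtain ⟨r, hr, hin, rfl⟩ := hstep.exists_rule_of_single_nonterminal
    rcases exists_eq_map_terminal_or_of_countP_isNT_le_one (hlin r hr)
      with ⟨u, hout⟩ | ⟨u, B, v, hout⟩
    · have hw : w.map Symbol.terminal = (p ++ u ++ q).map Symbol.terminal :=
        Derives.eq_of_map_terminal (by simpa [hout] using htail)
      refine ⟨[r], u ++ [], [], .cons_bot r hr hin hout (.nil none), ?_⟩
      simpa using List.map_injective_iff.mpr (fun _ _ => Symbol.terminal.inj) hw
    · obtain ⟨rs, ws, es, hpath, rfl⟩ :=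
        ih (p := p ++ u) (A := B) (q := v ++ q) (by simp [hout])
      exact ⟨r :: rs, u ++ ws, es ++ v, .cons_nt r hr hin hout hpath, by simp⟩

end

/-- For a linear context-free grammar `G`: (1) every accepting path `P` of `graph(G)`
(from `S` to `⊥`) yields a word `west(P) ++ east(P)` of `L(G)`; and (2) every word of `L(G)`
is `west(P) ++ east(P)` for some accepting path `P` of `graph(G)`. -/
theorem accepting_paths_correspond_to_words (T : Type) (G : ContextFreeGrammar.{0} T)
    (hlin : IsLinear G) :
    (∀ (rs : List (ContextFreeRule T G.NT)) (ws es : List T),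
        GPath G (some G.initial) rs ws es none → ws ++ es ∈ G.language) ∧
    (∀ w ∈ G.language, ∃ (rs : List (ContextFreeRule T G.NT)) (ws es : List T),
        GPath G (some G.initial) rs ws es none ∧ w = ws ++ es) := by
  refine ⟨fun rs ws es hpath => ?_, fun w hw => ?_⟩
  · simpa using hpath.derives
  · obtain ⟨rs, ws, es, hpath, rfl⟩ := exists_gpath_of_derives hlin hw (p := []) (q := []) rfl
    exact ⟨rs, ws, es, hpath, by simp⟩
end

section
/- Let G = (N, Σ, R, S) be a linear context-free grammar, fix a total order on R, and extend it to the order < on paths (shorter paths first, then lexicographic). Then every accepting path P of graph(G) can be decomposed as P = P₁ e₁ P₂ e₂ ⋯ Pₙ eₙ Pₙ₊₁ for some n ≥ 0, where each Pᵢ is a (possibly empty) optimal path, each eᵢ ∈ R is a single edge, and for each i ∈ {1,…,n} the path Pᵢ eᵢ is not optimal. -/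
/-- `rs` labels a path from `u` to `v` in `graph(G)`. -/
def IsPath {T : Type} (G : ContextFreeGrammar.{0} T) (u : Option G.NT)
    (rs : List (ContextFreeRule T G.NT)) (v : Option G.NT) : Prop :=
  ∃ ws es, GPath G u rs ws es v

/-- The order `<` on paths induced by a (strict total) order `rlt` on rules:
shorter paths first, ties broken lexicographically. -/
def PathLT {T N : Type} (rlt : ContextFreeRule T N → ContextFreeRule T N → Prop)
    (p q : List (ContextFreeRule T N)) : Prop :=
  p.length < q.length ∨ (p.length = q.length ∧ List.Lex rlt p q)

/-- A path is optimal if it is the `<`-minimal path between its endpoints. -/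
def IsOptimal {T : Type} (G : ContextFreeGrammar.{0} T)
    (rlt : ContextFreeRule T G.NT → ContextFreeRule T G.NT → Prop)
    (u : Option G.NT) (rs : List (ContextFreeRule T G.NT)) (v : Option G.NT) : Prop :=
  IsPath G u rs v ∧ ∀ qs, IsPath G u qs v → ¬ PathLT rlt qs rs

/-- `Decomp G rlt u rs v` says that the path `rs` from `u` to `v` can be decomposed as
`P₁ e₁ P₂ e₂ ⋯ Pₙ eₙ Pₙ₊₁` (n ≥ 0) where each `Pᵢ` is a (possibly empty) optimal path,
each `eᵢ` is a single edge, and each `Pᵢ eᵢ` (1 ≤ i ≤ n) is not optimal. -/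
inductive Decomp {T : Type} (G : ContextFreeGrammar.{0} T)
    (rlt : ContextFreeRule T G.NT → ContextFreeRule T G.NT → Prop) :
    Option G.NT → List (ContextFreeRule T G.NT) → Option G.NT → Prop
  | last {u : Option G.NT} {rs} {v : Option G.NT} :
      IsOptimal G rlt u rs v → Decomp G rlt u rs v
  | step {u m m' v : Option G.NT} {P rest} (e : ContextFreeRule T G.NT) :
      IsOptimal G rlt u P m →
      IsPath G m [e] m' →
      ¬ IsOptimal G rlt u (P ++ [e]) m' →
      Decomp G rlt m' rest v →
      Decomp G rlt u (P ++ e :: rest) v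

/-!
Greedy decomposition: extend an optimal prefix `P` of the path one edge `e` at a time. While
`P e` stays optimal, keep extending; once it is not, cut after `e` and restart from the empty
(trivially optimal) path at the target of `e`.
-/

section Paths

variable {T : Type} {G : ContextFreeGrammar.{0} T}

theorem IsPath.nil (u : Option G.NT) : IsPath G u [] u :=
  ⟨[], [], GPath.nil u⟩

theorem IsPath.eq_of_nil {u v : Option G.NT} (h : IsPath G u [] v) : u = v := by
  obtain ⟨_, _, h⟩ := h
  cases h
  rfl

theorem IsPath.exists_of_cons {u v : Option G.NT} {e : ContextFreeRule T G.NT}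
    {rest : List (ContextFreeRule T G.NT)} (h : IsPath G u (e :: rest) v) :
    ∃ m, IsPath G u [e] m ∧ IsPath G m rest v := by
  obtain ⟨_, _, h⟩ := h
  cases h with
  | cons_nt _ hr hin hout hrest =>
    exact ⟨_, ⟨_, _, GPath.cons_nt _ hr hin hout (GPath.nil _)⟩, ⟨_, _, hrest⟩⟩
  | cons_bot _ hr hin hout hrest =>
    exact ⟨_, ⟨_, _, GPath.cons_bot _ hr hin hout (GPath.nil _)⟩, ⟨_, _, hrest⟩⟩

end Paths

theorem not_pathLT_nil {T N : Type} (rlt : ContextFreeRule T N → ContextFreeRule T N → Prop)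
    (qs : List (ContextFreeRule T N)) : ¬ PathLT rlt qs [] := by
  rintro (hlen | ⟨hlen, hlex⟩)
  · exact Nat.not_lt_zero _ hlen
  · rw [List.length_eq_zero_iff.mp hlen] at hlex
    exact List.not_lex_nil hlex

section Decomposition

variable {T : Type} {G : ContextFreeGrammar.{0} T}
  (rlt : ContextFreeRule T G.NT → ContextFreeRule T G.NT → Prop)

theorem IsOptimal.nil (u : Option G.NT) : IsOptimal G rlt u [] u :=
  ⟨IsPath.nil u, fun qs _ => not_pathLT_nil rlt qs⟩

theorem Decomp.of_isOptimal_append {u m v : Option G.NT} {P : List (ContextFreeRule T G.NT)}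
    (rest : List (ContextFreeRule T G.NT)) (hP : IsOptimal G rlt u P m)
    (hrest : IsPath G m rest v) : Decomp G rlt u (P ++ rest) v := by
  induction rest generalizing u P m with
  | nil =>
    obtain rfl := hrest.eq_of_nil
    simpa using Decomp.last hP
  | cons e rest ih =>
    obtain ⟨m', he, hrest⟩ := hrest.exists_of_cons
    by_cases hPe : IsOptimal G rlt u (P ++ [e]) m'
    · simpa using ih hPe hrest
    · simpa using Decomp.step e hP he hPe (ih (IsOptimal.nil rlt m') hrest)

theorem Decomp.of_isPath {u v : Option G.NT} {rs : List (ContextFreeRule T G.NT)}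
    (h : IsPath G u rs v) : Decomp G rlt u rs v := by
  simpa using Decomp.of_isOptimal_append rlt rs (IsOptimal.nil rlt u) h

end Decomposition

theorem accepting_path_decomposition_general (T : Type) (G : ContextFreeGrammar.{0} T)
    (rlt : ContextFreeRule T G.NT → ContextFreeRule T G.NT → Prop) :
    ∀ (rs : List (ContextFreeRule T G.NT)) (ws es : List T),
      GPath G (some G.initial) rs ws es none →
      Decomp G rlt (some G.initial) rs none :=
  fun _ ws es h => Decomp.of_isPath rlt ⟨ws, es, h⟩

/-- Every accepting path of `graph(G)` (for a linear grammar `G`, with any total order on the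
rules) decomposes as `P₁ e₁ P₂ e₂ ⋯ Pₙ eₙ Pₙ₊₁` with each `Pᵢ` optimal and each `Pᵢ eᵢ`
not optimal. -/
theorem accepting_path_decomposition (T : Type) (G : ContextFreeGrammar.{0} T)
    (hlin : IsLinear G)
    (rlt : ContextFreeRule T G.NT → ContextFreeRule T G.NT → Prop)
    (hto : IsStrictTotalOrder (ContextFreeRule T G.NT) rlt) :
    ∀ (rs : List (ContextFreeRule T G.NT)) (ws es : List T),
      GPath G (some G.initial) rs ws es none →
      Decomp G rlt (some G.initial) rs none :=
  accepting_path_decomposition_general T G rlt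
end

section
/- Let G = (N, Σ, R, S) be a context-free grammar and Lin(G) the linear context-free grammar obtained from G by the linearization construction (for any choice of the witness words x_A). Then L(Lin(G)) ⊆ L(G), i.e., every word generated by Lin(G) is generated by G. -/
/-- A nonterminal `A` is productive if it derives at least one terminal word. -/
def Productive {T : Type} (G : ContextFreeGrammar.{0} T) (A : G.NT) : Prop :=
  ∃ w : List T, G.Derives [Symbol.nonterminal A] (w.map Symbol.terminal)

/-- Substitute a nonterminal symbol by (the terminal word given by) its witness word `x A`,
leaving terminal symbols unchanged. -/
def substWitness {T N : Type} (x : N → List T) : Symbol T N → List (Symbol T N)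
  | Symbol.terminal t => [Symbol.terminal t]
  | Symbol.nonterminal A => (x A).map Symbol.terminal

/-- `LinRuleOf x r r'` : the rule `r'` is one of the rules obtained from
`r : A → x₀ A₁ x₁ ⋯ Aₙ xₙ` in the linearization construction, i.e. either `r` has no
nonterminal in its right-hand side and `r' = r`, or `r'` is obtained from `r` by keeping one
occurrence of a nonterminal `B` and replacing every other nonterminal `A` by its witness
word `x A`. -/
def LinRuleOf {T N : Type} (x : N → List T) (r r' : ContextFreeRule T N) : Prop :=
  r'.input = r.input ∧
  ((∃ u : List T, r.output = u.map Symbol.terminal ∧ r'.output = r.output) ∨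
   ∃ (l rt : List (Symbol T N)) (B : N),
     r.output = l ++ Symbol.nonterminal B :: rt ∧
     r'.output = l.flatMap (substWitness x) ++ Symbol.nonterminal B :: rt.flatMap (substWitness x))

/-- `IsLinearization G x R'` : `R'` is the rule set of `Lin(G)`, the linearization of `G`
obtained by choosing, for each productive nonterminal `A`, a witness word `x A` produced
by `A`: a rule is in `R'` iff it is obtained from some rule of `G` all of whose right-hand-side
nonterminals are productive, by keeping one nonterminal occurrence and replacing the others by
their witness words (rules with terminal-only right-hand sides are kept as is). -/
def IsLinearization {T : Type} (G : ContextFreeGrammar.{0} T) (x : G.NT → List T)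
    (R' : Finset (ContextFreeRule T G.NT)) : Prop :=
  (∀ A : G.NT, Productive G A → G.Derives [Symbol.nonterminal A] ((x A).map Symbol.terminal)) ∧
  ∀ r' : ContextFreeRule T G.NT, r' ∈ R' ↔
    ∃ r ∈ G.rules,
      (∀ A : G.NT, Symbol.nonterminal A ∈ r.output → Productive G A) ∧ LinRuleOf x r r'

/-!
Every rule of `Lin(G)` is derivable in `G`: apply the rule of `G` it comes from, then derive
each substituted nonterminal `A` to its witness word `x A`, which `A` produces because it is
productive. A derivation in `Lin(G)` is therefore simulated step by step in `G`.
-/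

namespace ContextFreeGrammar

variable {T : Type} {g : ContextFreeGrammar T}

theorem Derives.append {u u' v v' : List (Symbol T g.NT)} (hu : g.Derives u u')
    (hv : g.Derives v v') : g.Derives (u ++ v) (u' ++ v') :=
  (hu.append_right v).trans (hv.append_left u')

theorem derives_of_forall_rule_derives {S : g.NT} {R : Finset (ContextFreeRule T g.NT)}
    (hR : ∀ r ∈ R, g.Derives [.nonterminal r.input] r.output) {u v : List (Symbol T g.NT)}
    (huv : (ContextFreeGrammar.mk g.NT S R).Derives u v) : g.Derives u v := by
  induction huv with
  | refl => exact Derives.refl u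
  | tail _ hstep ih =>
    obtain ⟨r, hr, hrw⟩ := hstep
    obtain ⟨p, q, rfl, rfl⟩ := hrw.exists_parts
    refine ih.trans ?_
    simpa only [List.append_assoc] using ((hR r hr).append_right q).append_left p

end ContextFreeGrammar

open ContextFreeGrammar

section Linearization

variable {T : Type} {G : ContextFreeGrammar.{0} T} {x : G.NT → List T}

theorem derives_flatMap_substWitness {l : List (Symbol T G.NT)}
    (hx : ∀ A, Symbol.nonterminal A ∈ l → G.Derives [.nonterminal A] ((x A).map .terminal)) :
    G.Derives l (l.flatMap (substWitness x)) := by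
  induction l with
  | nil => exact Derives.refl []
  | cons s l ih =>
    have hs : G.Derives [s] (substWitness x s) := by
      cases s with
      | terminal t => exact Derives.refl _
      | nonterminal A => exact hx A List.mem_cons_self
    exact hs.append (ih fun A hA => hx A (List.mem_cons_of_mem s hA))

theorem derives_output_of_linRuleOf {r r' : ContextFreeRule T G.NT} (hr : r ∈ G.rules)
    (hx : ∀ A, Symbol.nonterminal A ∈ r.output → G.Derives [.nonterminal A] ((x A).map .terminal))
    (hlin : LinRuleOf x r r') : G.Derives [.nonterminal r'.input] r'.output := by
  obtain ⟨hinput, ⟨-, -, houtput⟩ | ⟨l, rt, B, hsplit, houtput⟩⟩ := hlin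
  all_goals
    rw [hinput, houtput]
    refine (Produces.single ⟨r, hr, ContextFreeRule.Rewrites.input_output⟩).trans ?_
  · exact Derives.refl _
  · rw [hsplit] at hx ⊢
    have hl := derives_flatMap_substWitness fun A hA => hx A (List.mem_append_left _ hA)
    have hrt := derives_flatMap_substWitness fun A hA =>
      hx A (List.mem_append_right _ (List.mem_cons_of_mem _ hA))
    exact hl.append (hrt.append_left [.nonterminal B])

end Linearization

/-- Every word generated by the linearization `Lin(G)` (for any choice of witness words)
is generated by `G`: `L(Lin(G)) ⊆ L(G)`. -/
theorem lin_language_subset (T : Type) (G : ContextFreeGrammar.{0} T) (x : G.NT → List T)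
    (R' : Finset (ContextFreeRule T G.NT)) (hR' : IsLinearization G x R') :
    ∀ w ∈ (ContextFreeGrammar.mk G.NT G.initial R').language, w ∈ G.language := by
  obtain ⟨hwitness, hrules⟩ := hR'
  have hsim : ∀ r' ∈ R', G.Derives [.nonterminal r'.input] r'.output := by
    intro r' hr'
    obtain ⟨r, hr, hproductive, hlin⟩ := (hrules r').mp hr'
    exact derives_output_of_linRuleOf hr (fun A hA => hwitness A (hproductive A hA)) hlin
  intro w hw
  exact derives_of_forall_rule_derives hsim hw
end

section
/- Let G = (N, Σ, R, S) be a context-free grammar and Lin(G) a linearization of G. Then the number of production rules of Lin(G) is at most |G| = ∑_{(A → rhs) ∈ R} (|rhs| + 1). (Each rule A → rhs of G is duplicated at most |rhs| times in the construction of Lin(G).) -/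
/-! Every rule `r'` of `Lin(G)` coming from `r : A → rhs` is determined by `r` and a position
`i ≤ |rhs|`: the position of the nonterminal occurrence that `r'` keeps, or `i = |rhs|` when `rhs`
is terminal. So `Lin(G)` is the image of a set of `∑_r (|rhs| + 1)` pairs `(r, i)`. -/

namespace ContextFreeRule

variable {T N : Type}

def linAt (x : N → List T) (r : ContextFreeRule T N) (i : ℕ) : ContextFreeRule T N :=
  match r.output[i]? with
  | some (Symbol.nonterminal B) =>
      ⟨r.input, (r.output.take i).flatMap (substWitness x) ++
        Symbol.nonterminal B :: (r.output.drop (i + 1)).flatMap (substWitness x)⟩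
  | _ => r

theorem linAt_length (x : N → List T) (r : ContextFreeRule T N) :
    r.linAt x r.output.length = r := by
  simp [linAt]

theorem linAt_of_output_eq_append_cons (x : N → List T) {r : ContextFreeRule T N}
    {l rt : List (Symbol T N)} {B : N} (h : r.output = l ++ Symbol.nonterminal B :: rt) :
    r.linAt x l.length =
      ⟨r.input, l.flatMap (substWitness x) ++ Symbol.nonterminal B :: rt.flatMap (substWitness x)⟩ := by
  have hget : r.output[l.length]? = some (Symbol.nonterminal B) := by simp [h]
  have htake : r.output.take l.length = l := by simp [h]
  have hdrop : r.output.drop (l.length + 1) = rt := by simp [h, List.drop_append]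
  rw [linAt, hget, htake, hdrop]

end ContextFreeRule

theorem LinRuleOf.exists_linAt_eq {T N : Type} {x : N → List T} {r r' : ContextFreeRule T N}
    (h : LinRuleOf x r r') : ∃ i < r.output.length + 1, r.linAt x i = r' := by
  obtain ⟨hin, ⟨-, -, hout⟩ | ⟨l, rt, B, hro, hout⟩⟩ := h
  · exact ⟨r.output.length, Nat.lt_succ_self _, by
      rw [ContextFreeRule.linAt_length]; ext1 <;> simp [hin, hout]⟩
  · refine ⟨l.length, by simp [hro], ?_⟩
    rw [ContextFreeRule.linAt_of_output_eq_append_cons x hro]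
    ext1 <;> simp [hin, hout]

/-- The number of production rules of a linearization `Lin(G)` of `G` is at most
`|G| = ∑_{(A → rhs) ∈ R} (|rhs| + 1)`, the size of `G`. -/
theorem lin_rules_card_le_size (T : Type) (G : ContextFreeGrammar.{0} T) (x : G.NT → List T)
    (R' : Finset (ContextFreeRule T G.NT)) (hR' : IsLinearization G x R') :
    R'.card ≤ ∑ r ∈ G.rules, (r.output.length + 1) := by
  have hsurj : Set.SurjOn (fun p : (_ : ContextFreeRule T G.NT) × ℕ => p.1.linAt x p.2)
      ↑(G.rules.sigma fun r => Finset.range (r.output.length + 1)) ↑R' := by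
    intro r' hr'
    obtain ⟨r, hrG, -, hlin⟩ := (hR'.2 r').mp hr'
    obtain ⟨i, hi, rfl⟩ := hlin.exists_linAt_eq
    exact ⟨⟨r, i⟩, by simp [hrG, hi], rfl⟩
  simpa [Finset.card_sigma] using Finset.card_le_card_of_surjOn _ hsurj
end
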